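/- arXiv:1606.04338 — 4 statements merged into one kernel-verified Lean document; each statement's English description precedes it below -/
import Mathlib

section
/- Let n ≥ 1 and let r_n = (1, n, n², …, n^{ℓ−1}) ∈ ℤ^ℓ with ℓ ≥ 2. Then the minimum over all nonzero s ∈ ℤ^ℓ with r_n · s = 0 of max_i |s_i| equals n. -/
lemma base_digits_zero (n : ℕ) (hn : 1 ≤ n) : ∀ (k : ℕ) (s : ℕ → ℤ),
    (∀ i, (s i).natAbs < n) → (∑ i ∈ Finset.range k, (n:ℤ)^i * s i = 0) →
    ∀ i < k, s i = 0 := by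
  intro k
  induction k with
  | zero => intro s _ _ i hi; omega
  | succ k ih =>
    intro s hs hsum i hi
    rw [Finset.sum_range_succ'] at hsum
    have h0 : s 0 = 0 := by
      have hdvd : (n:ℤ) ∣ s 0 := by
        have h : s 0 = -∑ i ∈ Finset.range k, (n:ℤ)^(i+1) * s (i+1) := by
          simp only [pow_zero, one_mul] at hsum; linarith
        rw [h]
        refine dvd_neg.mpr (Finset.dvd_sum fun j _ => ?_)
        exact Dvd.dvd.mul_right (dvd_pow_self _ (by omega)) _
      refine Int.eq_zero_of_abs_lt_dvd hdvd ?_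
      have := hs 0
      rw [Int.abs_eq_natAbs]
      exact_mod_cast this
    have hsum2 : ∑ i ∈ Finset.range k, (n:ℤ)^i * s (i+1) = 0 := by
      have h : (n:ℤ) * ∑ i ∈ Finset.range k, (n:ℤ)^i * s (i+1) = 0 := by
        rw [Finset.mul_sum]
        simp only [pow_zero, one_mul, h0, add_zero] at hsum
        rw [← hsum]
        apply Finset.sum_congr rfl
        intro j _; ring
      have hn0 : (n:ℤ) ≠ 0 := by exact_mod_cast (by omega : n ≠ 0)
      exact (mul_eq_zero.mp h).resolve_left hn0
    rcases Nat.eq_zero_or_pos i with h | h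
    · rw [h]; exact h0
    · obtain ⟨j, rfl⟩ := Nat.exists_eq_add_of_lt h
      simp only [Nat.zero_add]
      exact ih (fun i => s (i+1)) (fun i => hs (i+1)) hsum2 j (by omega)

/-- **Boyd's lemma on `q`.** For `ℓ ≥ 2` and `n ≥ 1`, the vector
`r_n = (1, n, n², …, n^{ℓ-1}) ∈ ℤ^ℓ` satisfies `q(r_n) = n`, where `q(r)` is the
least value of `max_i |s_i|` over nonzero integer vectors `s` orthogonal to `r`. -/
theorem q_of_geometric_vector (l n : ℕ) (hl : 2 ≤ l) (hn : 1 ≤ n) :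
    IsLeast { M : ℕ | ∃ s : Fin l → ℤ, s ≠ 0 ∧
      (∑ i : Fin l, ((n : ℤ) ^ (i : ℕ)) * s i = 0) ∧
      Finset.univ.sup (fun i => (s i).natAbs) = M } n := by
  obtain ⟨m, rfl⟩ : ∃ m, l = m + 2 := ⟨l - 2, by omega⟩
  constructor
  · -- membership
    refine ⟨fun i => if (i:ℕ) = 0 then (n:ℤ) else if (i:ℕ) = 1 then -1 else 0, ?_, ?_, ?_⟩
    · intro h
      have := congrFun h 1
      simp at this
    · rw [Fin.sum_univ_succ, Fin.sum_univ_succ]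
      simp [Fin.val_succ, mul_comm]
    · apply le_antisymm
      · apply Finset.sup_le
        intro i _
        dsimp only
        split_ifs <;> simp <;> omega
      · have := Finset.le_sup (f := fun i =>
          (if ((i : Fin (m+2)):ℕ) = 0 then (n:ℤ) else if ((i : Fin (m+2)):ℕ) = 1 then -1 else 0).natAbs)
          (Finset.mem_univ (0 : Fin (m+2)))
        simpa using this
  · -- lower bound
    rintro M ⟨s, hs0, hsum, rfl⟩
    by_contra hlt
    push_neg at hlt
    have hall : ∀ i : Fin (m+2), (s i).natAbs < n := by
      intro i
      exact lt_of_le_of_lt (Finset.le_sup (f := fun i => (s i).natAbs) (Finset.mem_univ i)) hlt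
    set t : ℕ → ℤ := fun i => if h : i < m + 2 then s ⟨i, h⟩ else 0 with ht
    have hsum' : ∑ i ∈ Finset.range (m+2), (n:ℤ)^i * t i = 0 := by
      rw [← hsum, Finset.sum_range]
      apply Finset.sum_congr rfl
      intro i _
      simp [ht, i.isLt]
    have htlt : ∀ i, (t i).natAbs < n := by
      intro i
      by_cases h : i < m + 2
      · simpa [ht, h] using hall ⟨i, h⟩
      · simp [ht, h]; omega
    have hz := base_digits_zero n hn (m+2) t htlt hsum'
    apply hs0
    funext i
    have := hz i i.isLt
    simpa [ht, i.isLt] using this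
end

section
/- Let F be a nonzero Laurent polynomial in k variables over ℂ, V ∈ ℤ^{ℓ×ℓ} nonsingular, and A ∈ ℤ^{ℓ×k}. Then m(F_{VA}) = m(F_A). -/
open MeasureTheory

noncomputable section

/-- A Laurent polynomial in `k` variables, given by its finitely supported
coefficient function on exponent vectors in `ℤ^k`. -/
abbrev LPoly (k : ℕ) := (Fin k → ℤ) →₀ ℂ

/-- Evaluation of a Laurent polynomial at a point of `ℂ^k`. -/
def evalT {k : ℕ} (F : LPoly k) (z : Fin k → ℂ) : ℂ :=
  ∑ e ∈ F.support, F e * ∏ i, z i ^ (e i)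

/-- The point of the `k`-torus with angles `t`. -/
def torusPt {k : ℕ} (t : Fin k → ℝ) : Fin k → ℂ :=
  fun i => Complex.exp (2 * Real.pi * Complex.I * (t i))

/-- The logarithmic Mahler measure of a Laurent polynomial in `k` variables. -/
def mm {k : ℕ} (F : LPoly k) : ℝ :=
  ∫ t in Set.Icc (0 : Fin k → ℝ) 1, Real.log ‖evalT F (torusPt t)‖

/-- The exponent substitution attached to an integer matrix `A ∈ ℤ^{ℓ×k}`. -/
def substExp {l k : ℕ} (A : Matrix (Fin l) (Fin k) ℤ) (e : Fin k → ℤ) : Fin l → ℤ :=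
  fun i => ∑ j, A i j * e j

/-- `substM A F` is the Laurent polynomial `F_A(z) = F(z^A)` in `ℓ` variables. -/
def substM {l k : ℕ} (A : Matrix (Fin l) (Fin k) ℤ) (F : LPoly k) : LPoly l :=
  Finsupp.mapDomain (substExp A) F

/-- A one-row integer matrix from a vector `r ∈ ℤ^k`. -/
def rowMat {k : ℕ} (r : Fin k → ℤ) : Matrix (Fin 1) (Fin k) ℤ :=
  Matrix.of fun _ j => r j

/-- The set `ℳ(F)` of Mahler measures of all the nonzero `F_A`. -/
def Mset {k : ℕ} (F : LPoly k) : Set ℝ :=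
  { x | ∃ (l : ℕ) (A : Matrix (Fin l) (Fin k) ℤ), substM A F ≠ 0 ∧ mm (substM A F) = x }

/-- The set `ℳ₁(F)` of Mahler measures of the nonzero one-variable substitutions `F_r`. -/
def M1set {k : ℕ} (F : LPoly k) : Set ℝ :=
  { x | ∃ r : Fin k → ℤ, substM (rowMat r) F ≠ 0 ∧ mm (substM (rowMat r) F) = x }

namespace MahlerAux

variable {l k : ℕ}

abbrev Tor (l : ℕ) := Fin l → AddCircle (1 : ℝ)

def qm {l : ℕ} (t : Fin l → ℝ) : Tor l := fun i => (t i : AddCircle (1 : ℝ))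

def μT (l : ℕ) : Measure (Tor l) := Measure.pi fun _ => (volume : Measure (AddCircle (1 : ℝ)))

def fbar {l : ℕ} (G : LPoly l) (x : Tor l) : ℝ :=
  Real.log ‖evalT G (fun i => (AddCircle.toCircle (x i) : ℂ))‖

def Lt {l k : ℕ} (A : Matrix (Fin l) (Fin k) ℤ) (t : Fin l → ℝ) : Fin k → ℝ :=
  (A.map ((↑) : ℤ → ℝ)).transpose.mulVec t

lemma Lt_apply (A : Matrix (Fin l) (Fin k) ℤ) (t : Fin l → ℝ) (j : Fin k) :
    Lt A t j = ∑ i, (A i j : ℝ) * t i := by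
  simp [Lt, Matrix.mulVec, dotProduct, Matrix.transpose_apply]

-- composition of substitutions
lemma substExp_comp (V : Matrix (Fin l) (Fin l) ℤ) (A : Matrix (Fin l) (Fin k) ℤ) :
    substExp (V * A) = substExp V ∘ substExp A := by
  funext e i
  simp only [substExp, Function.comp, Matrix.mul_apply]
  simp only [Finset.sum_mul, Finset.mul_sum, mul_assoc]
  exact Finset.sum_comm

lemma substM_mul (V : Matrix (Fin l) (Fin l) ℤ) (A : Matrix (Fin l) (Fin k) ℤ) (F : LPoly k) :
    substM (V * A) F = substM V (substM A F) := by
  simp [substM, substExp_comp, Finsupp.mapDomain_comp]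

lemma prod_torusPt_zpow {n : ℕ} (s : Fin n → ℝ) (m : Fin n → ℤ) :
    ∏ i, torusPt s i ^ m i
      = Complex.exp (∑ i, (m i : ℂ) * (2 * Real.pi * Complex.I * s i)) := by
  rw [Complex.exp_sum]
  exact Finset.prod_congr rfl fun i _ => (Complex.exp_int_mul _ _).symm

-- evaluation of substituted polynomial on the torus
lemma evalT_substM (A : Matrix (Fin l) (Fin k) ℤ) (F : LPoly k) (t : Fin l → ℝ) :
    evalT (substM A F) (torusPt t) = evalT F (torusPt (Lt A t)) := by
  have hL : evalT (substM A F) (torusPt t)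
      = F.sum fun e c => c * ∏ i, torusPt t i ^ (substExp A e i) := by
    show (Finsupp.mapDomain (substExp A) F).sum (fun e c => c * ∏ i, torusPt t i ^ (e i)) = _
    exact Finsupp.sum_mapDomain_index (fun _ => zero_mul _) (fun _ c d => add_mul c d _)
  have hR : evalT F (torusPt (Lt A t))
      = F.sum fun e c => c * ∏ j, torusPt (Lt A t) j ^ (e j) := rfl
  rw [hL, hR]
  refine Finsupp.sum_congr fun e _ => ?_
  rw [prod_torusPt_zpow, prod_torusPt_zpow]
  congr 1
  simp only [substExp, Lt_apply]
  push_cast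
  simp only [Finset.sum_mul, Finset.mul_sum]
  rw [Finset.sum_comm]
  exact congrArg Complex.exp
    (Finset.sum_congr rfl fun j _ => Finset.sum_congr rfl fun i _ => by ring)


-- bridging torusPt with toCircle
lemma toCircle_qm (t : Fin l → ℝ) (i : Fin l) :
    (AddCircle.toCircle (qm t i) : ℂ) = torusPt t i := by
  show (AddCircle.toCircle ((t i : ℝ) : AddCircle (1:ℝ)) : ℂ) = _
  rw [AddCircle.toCircle_apply_mk, Circle.coe_exp, torusPt]
  exact congrArg Complex.exp (by push_cast; ring)

lemma fbar_qm (G : LPoly l) (t : Fin l → ℝ) :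
    fbar G (qm t) = Real.log ‖evalT G (torusPt t)‖ := by
  unfold fbar
  congr 1
  congr 1
  exact congrArg (evalT G) (funext fun i => toCircle_qm t i)

lemma coe_zpow' (z : Circle) (n : ℤ) : ((z ^ n : Circle) : ℂ) = (z : ℂ) ^ n := by
  have hp : ∀ m : ℕ, ((z ^ m : Circle) : ℂ) = (z : ℂ) ^ m := fun m => map_pow Circle.coeHom z m
  rcases n with n | n
  · simpa using hp n
  · simp [zpow_negSucc, hp]

lemma continuous_eval (G : LPoly l) :
    Continuous fun x : Tor l => evalT G (fun i => (AddCircle.toCircle (x i) : ℂ)) := by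
  unfold evalT
  refine continuous_finset_sum _ fun e _ => Continuous.mul continuous_const ?_
  refine continuous_finset_prod _ fun i _ => ?_
  have h2 : Continuous fun x : Tor l => (AddCircle.toCircle (x i)) ^ (e i) :=
    (continuous_zpow (e i)).comp (AddCircle.continuous_toCircle.comp (continuous_apply i))
  have h3 : Continuous fun x : Tor l => ((AddCircle.toCircle (x i) ^ (e i) : Circle) : ℂ) :=
    continuous_subtype_val.comp h2
  simpa only [coe_zpow'] using h3

lemma measurable_fbar (G : LPoly l) : Measurable (fbar G) :=
  Real.measurable_log.comp (continuous_eval G).norm.measurable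

lemma measurable_qm : Measurable (qm (l := l)) :=
  measurable_pi_lambda _ fun i =>
    ((AddCircle.continuous_mk' 1).comp (continuous_apply i)).measurable

lemma vol_preimage_coe_inter_Icc {s : Set (AddCircle (1:ℝ))} (hs : MeasurableSet s) :
    volume (((↑) : ℝ → AddCircle (1:ℝ)) ⁻¹' s ∩ Set.Icc 0 1) = volume s := by
  have h1 := (UnitAddCircle.measurePreserving_mk 0).measure_preimage hs.nullMeasurableSet
  rw [Measure.restrict_apply' measurableSet_Ioc] at h1
  rw [← h1]
  norm_num
  refine measure_congr ?_
  exact Filter.EventuallyEq.inter (by rfl) (by simpa using (Ioc_ae_eq_Icc (α := ℝ) (a := (0:ℝ)) (b := 1)).symm)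

lemma map_qm : (volume.restrict (Set.Icc (0 : Fin l → ℝ) 1)).map qm = μT l := by
  refine (Measure.pi_eq fun s hs => ?_).symm
  rw [Measure.map_apply measurable_qm (MeasurableSet.univ_pi hs)]
  have hpre : qm ⁻¹' (Set.univ.pi s)
      = Set.univ.pi fun i => ((↑) : ℝ → AddCircle (1:ℝ)) ⁻¹' s i :=
    Set.preimage_pi _ _ _
  have hmc : Measurable ((↑) : ℝ → AddCircle (1:ℝ)) :=
    (UnitAddCircle.measurePreserving_mk 0).measurable
  rw [hpre, Measure.restrict_apply (MeasurableSet.univ_pi fun i => hmc (hs i))]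
  rw [← Set.pi_univ_Icc, ← Set.pi_inter_distrib, volume_pi_pi]
  exact Finset.prod_congr rfl fun i _ => vol_preimage_coe_inter_Icc (hs i)

lemma mm_eq (G : LPoly l) : mm G = ∫ x, fbar G x ∂(μT l) := by
  rw [mm, ← map_qm,
    integral_map measurable_qm.aemeasurable (measurable_fbar G).aestronglyMeasurable]
  exact integral_congr_ae (Filter.Eventually.of_forall fun t => (fbar_qm G t).symm)

def Phi (V : Matrix (Fin l) (Fin l) ℤ) (x : Tor l) : Tor l := fun j => ∑ i, V i j • x i

lemma Phi_add (V : Matrix (Fin l) (Fin l) ℤ) (x y : Tor l) :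
    Phi V (x + y) = Phi V x + Phi V y := by
  funext j; simp [Phi, smul_add, Finset.sum_add_distrib]

lemma continuous_Phi (V : Matrix (Fin l) (Fin l) ℤ) : Continuous (Phi V) :=
  continuous_pi fun j => continuous_finset_sum _ fun i _ =>
    (continuous_zsmul (V i j)).comp (continuous_apply i)

lemma Phi_qm (V : Matrix (Fin l) (Fin l) ℤ) (t : Fin l → ℝ) :
    Phi V (qm t) = qm (Lt V t) := by
  funext j
  show ∑ i, V i j • ((t i : ℝ) : AddCircle (1:ℝ)) = ((Lt V t j : ℝ) : AddCircle (1:ℝ))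
  rw [Lt_apply]
  have hmk : ∀ r : ℝ, ((r : ℝ) : AddCircle (1:ℝ))
      = QuotientAddGroup.mk' (AddSubgroup.zmultiples (1:ℝ)) r := fun _ => rfl
  simp only [hmk]
  rw [map_sum]
  exact Finset.sum_congr rfl fun i _ => by rw [← zsmul_eq_mul, map_zsmul]

lemma surjective_Lt {V : Matrix (Fin l) (Fin l) ℤ} (hV : V.det ≠ 0) :
    Function.Surjective (Lt V) := by
  intro r
  set W := V.map ((↑) : ℤ → ℝ) with hW
  have hdet : W.det ≠ 0 := by
    have : W.det = (V.det : ℝ) := by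
      rw [hW]
      simpa using (RingHom.map_det (Int.castRingHom ℝ) V).symm
    rw [this]
    exact_mod_cast hV
  have hdetT : W.transpose.det ≠ 0 := by rwa [Matrix.det_transpose]
  refine ⟨(W.transpose)⁻¹.mulVec r, ?_⟩
  show W.transpose.mulVec _ = r
  rw [Matrix.mulVec_mulVec, Matrix.mul_nonsing_inv _ (isUnit_iff_ne_zero.mpr hdetT),
    Matrix.one_mulVec]

lemma surjective_qm : Function.Surjective (qm (l := l)) := by
  intro x
  choose r hr using fun i => QuotientAddGroup.mk_surjective (x i)
  exact ⟨r, funext hr⟩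

lemma surjective_Phi {V : Matrix (Fin l) (Fin l) ℤ} (hV : V.det ≠ 0) :
    Function.Surjective (Phi V) := by
  intro x
  obtain ⟨r, rfl⟩ := surjective_qm x
  obtain ⟨t, ht⟩ := surjective_Lt hV r
  exact ⟨qm t, by rw [Phi_qm, ht]⟩

instance : IsProbabilityMeasure (volume : Measure (AddCircle (1:ℝ))) :=
  ⟨UnitAddCircle.measure_univ⟩

instance : IsProbabilityMeasure (μT l) := by unfold μT; infer_instance
instance : (μT l).IsAddHaarMeasure := by unfold μT; infer_instance

lemma map_Phi {V : Matrix (Fin l) (Fin l) ℤ} (hV : V.det ≠ 0) :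
    (μT l).map (Phi V) = μT l := by
  have hm : Measurable (Phi V) := (continuous_Phi V).measurable
  have hsurj := surjective_Phi (l := l) hV
  haveI : IsProbabilityMeasure ((μT l).map (Phi V)) :=
    Measure.isProbabilityMeasure_map hm.aemeasurable
  haveI : Measure.IsAddLeftInvariant ((μT l).map (Phi V)) := by
    constructor
    intro c
    obtain ⟨d, rfl⟩ := hsurj c
    rw [Measure.map_map (measurable_const_add _) hm]
    have hcomp : (fun x => Phi V d + x) ∘ Phi V = Phi V ∘ fun x => d + x := by
      funext x
      show Phi V d + Phi V x = Phi V (d + x)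
      rw [Phi_add]
    rw [hcomp, ← Measure.map_map hm (measurable_const_add d),
      map_add_left_eq_self (μT l) d]
  haveI : ((μT l).map (Phi V)).IsOpenPosMeasure := by
    constructor
    intro U hU hne
    rw [Measure.map_apply hm hU.measurableSet]
    refine (hU.preimage (continuous_Phi V)).measure_ne_zero (μT l) ?_
    obtain ⟨u, hu⟩ := hne
    obtain ⟨x, rfl⟩ := hsurj u
    exact ⟨x, hu⟩
  haveI : Measure.IsAddHaarMeasure ((μT l).map (Phi V)) := ⟨⟩
  exact Measure.isAddHaarMeasure_eq_of_isProbabilityMeasure _ _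

lemma fbar_substM (V : Matrix (Fin l) (Fin l) ℤ) (G : LPoly l) :
    fbar (substM V G) = fbar G ∘ Phi V := by
  funext x
  obtain ⟨t, rfl⟩ := surjective_qm x
  show fbar (substM V G) (qm t) = fbar G (Phi V (qm t))
  rw [Phi_qm, fbar_qm, fbar_qm, evalT_substM]

lemma mm_substM_sq (G : LPoly l) {V : Matrix (Fin l) (Fin l) ℤ} (hV : V.det ≠ 0) :
    mm (substM V G) = mm G := by
  rw [mm_eq, mm_eq, fbar_substM]
  have h := integral_map (μ := μT l) (f := fbar G)
    (continuous_Phi V).measurable.aemeasurable (measurable_fbar G).aestronglyMeasurable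
  rw [map_Phi (l := l) hV] at h
  rw [h]
  rfl

end MahlerAux

/-- For a nonzero Laurent polynomial `F` in `k` variables, a nonsingular
`V ∈ ℤ^{ℓ×ℓ}` and any `A ∈ ℤ^{ℓ×k}`, `m(F_{VA}) = m(F_A)`. -/


theorem mm_substM_mul_left {l k : ℕ} (F : LPoly k) (hF : F ≠ 0)
    (V : Matrix (Fin l) (Fin l) ℤ) (hV : V.det ≠ 0) (A : Matrix (Fin l) (Fin k) ℤ) :
    mm (substM (V * A) F) = mm (substM A F) := by
  rw [MahlerAux.substM_mul]
  exact MahlerAux.mm_substM_sq _ hV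
end
end

section
/- Let H ∈ ℤ^{ℓ×k} be a matrix in Hermite normal form with rows a_1,…,a_ℓ. Then the lattice spanned by the rows of H is saturated in ℤ^k (i.e., its real span intersected with ℤ^k equals the lattice itself) if and only if for every i with 1 ≤ i ≤ ℓ and every choice of integers u_{i+1},…,u_ℓ, the gcd of the components of a_i + Σ_{j=i+1}^ℓ u_j a_j equals 1. -/
noncomputable section

/-- `H ∈ ℤ^{ℓ×k}` is in (row-echelon) Hermite Normal Form: there are strictly
increasing pivot columns `p i`, the pivot entries are positive, entries to the left
of a pivot are zero, and entries above a pivot are nonnegative and smaller than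
the pivot. -/
def IsHNF {l k : ℕ} (H : Matrix (Fin l) (Fin k) ℤ) : Prop :=
  ∃ p : Fin l → Fin k, StrictMono p ∧
    (∀ i, 0 < H i (p i)) ∧
    (∀ (i : Fin l) (j : Fin k), (j : ℕ) < (p i : ℕ) → H i j = 0) ∧
    (∀ i i', i' < i → 0 ≤ H i' (p i) ∧ H i' (p i) < H i (p i))

/-- The lattice spanned by the rows of `H` is saturated in `ℤ^k`: any integer
vector in the real span of the rows lies in the integer row lattice. -/
def IsSaturated {l k : ℕ} (H : Matrix (Fin l) (Fin k) ℤ) : Prop :=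
  ∀ v : Fin k → ℤ,
    (fun j => (v j : ℝ)) ∈ Submodule.span ℝ (Set.range fun i j => ((H i j : ℤ) : ℝ)) →
    v ∈ Submodule.span ℤ (Set.range fun i => H i)

open Matrix

/-- Splitting a sum over `Fin l` at an index `j0`. -/
lemma sum_split_aux {M : Type*} [AddCommMonoid M] {l : ℕ} (j0 : Fin l) (f : Fin l → M) :
    ∑ j, f j = (∑ j ∈ Finset.univ.filter (fun j => j < j0), f j) + f j0
      + ∑ j ∈ Finset.univ.filter (fun j => j0 < j), f j := by
  classical
  have h1 := Finset.sum_filter_add_sum_filter_not Finset.univ (fun j => j < j0) f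
  have h2 : Finset.univ.filter (fun j => ¬ j < j0)
      = insert j0 (Finset.univ.filter (fun j => j0 < j)) := by
    ext x
    simp only [Finset.mem_filter, Finset.mem_univ, true_and, Finset.mem_insert, not_lt]
    constructor
    · intro h
      rcases eq_or_lt_of_le h with h | h
      · exact Or.inl h.symm
      · exact Or.inr h
    · rintro (rfl | h)
      · exact le_refl _
      · exact le_of_lt h
  have h3 : j0 ∉ Finset.univ.filter (fun j => j0 < j) := by simp
  rw [h2, Finset.sum_insert h3] at h1
  rw [← h1]
  abel

/-- The rows of a matrix with echelon pivots are `ℤ`-linearly independent. -/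
lemma rows_indep_aux {l k : ℕ} {H : Matrix (Fin l) (Fin k) ℤ} {p : Fin l → Fin k}
    (hmono : StrictMono p) (hpos : ∀ i, 0 < H i (p i))
    (hzero : ∀ (i : Fin l) (j : Fin k), (j : ℕ) < (p i : ℕ) → H i j = 0)
    (b : Fin l → ℤ) (hb : ∀ c, ∑ j, b j * H j c = 0) : ∀ j, b j = 0 := by
  classical
  by_contra hcon
  push_neg at hcon
  obtain ⟨j1, hj1⟩ := hcon
  have hne : (Finset.univ.filter (fun j => b j ≠ 0)).Nonempty :=
    ⟨j1, by simp [hj1]⟩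
  set j0 := (Finset.univ.filter (fun j => b j ≠ 0)).min' hne with hj0def
  have hj0 : b j0 ≠ 0 := by
    have := (Finset.univ.filter (fun j => b j ≠ 0)).min'_mem hne
    simpa using this
  have hmin : ∀ j, b j ≠ 0 → j0 ≤ j := fun j hj =>
    Finset.min'_le _ _ (by simp [hj])
  have hsum := hb (p j0)
  have : ∑ j, b j * H j (p j0) = b j0 * H j0 (p j0) := by
    apply Finset.sum_eq_single j0
    · intro j _ hjne
      rcases lt_or_gt_of_ne hjne with h | h
      · have : b j = 0 := by
          by_contra hbj
          exact absurd (hmin j hbj) (not_le.mpr h)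
        simp [this]
      · have : H j (p j0) = 0 := hzero j (p j0) (by exact_mod_cast hmono h)
        simp [this]
    · intro h
      simp at h
  rw [this] at hsum
  have := hpos j0
  rcases mul_eq_zero.mp hsum with h | h
  · exact hj0 h
  · omega

/-- A matrix `H` in Hermite Normal Form has saturated row lattice if and only if,
for each row index `i` and all integers `u_{i+1},…,u_ℓ`, the gcd of the components
of `a_i + ∑_{j>i} u_j a_j` is `1`. -/
theorem saturated_iff_gcd {l k : ℕ} (H : Matrix (Fin l) (Fin k) ℤ) (hH : IsHNF H) :
    IsSaturated H ↔
      ∀ i : Fin l, ∀ u : Fin l → ℤ,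
        Finset.univ.gcd
          (fun c => H i c + ∑ j ∈ Finset.univ.filter (fun j => i < j), u j * H j c) = 1 := by
  classical
  obtain ⟨p, hmono, hpos, hzero, -⟩ := hH
  constructor
  · -- saturated → gcd condition
    intro hsat i u
    set w : Fin k → ℤ :=
      fun c => H i c + ∑ j ∈ Finset.univ.filter (fun j => i < j), u j * H j c with hwdef
    set e : Fin l → ℤ := fun j => if j = i then 1 else if i < j then u j else 0 with hedef
    have hw : ∀ c, w c = ∑ j, e j * H j c := by
      intro c
      rw [sum_split_aux i (fun j => e j * H j c)]
      have h1 : ∑ j ∈ Finset.univ.filter (fun j => j < i), e j * H j c = 0 := by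
        apply Finset.sum_eq_zero
        intro j hj
        simp only [Finset.mem_filter, Finset.mem_univ, true_and] at hj
        have : e j = 0 := by simp [hedef, hj.ne, not_lt_of_gt hj]
        simp [this]
      have h2 : e i = 1 := by simp [hedef]
      have h3 : ∑ j ∈ Finset.univ.filter (fun j => i < j), e j * H j c
          = ∑ j ∈ Finset.univ.filter (fun j => i < j), u j * H j c := by
        apply Finset.sum_congr rfl
        intro j hj
        simp only [Finset.mem_filter, Finset.mem_univ, true_and] at hj
        have : e j = u j := by
          simp only [hedef]
          rw [if_neg hj.ne', if_pos hj]
        rw [this]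
      rw [h1, h2, h3, hwdef]
      ring
    set g : ℤ := Finset.univ.gcd w with hgdef
    have hgdvd : ∀ c, g ∣ w c := fun c => Finset.gcd_dvd (Finset.mem_univ c)
    have hwpi : w (p i) = H i (p i) := by
      have : ∑ j ∈ Finset.univ.filter (fun j => i < j), u j * H j (p i) = 0 := by
        apply Finset.sum_eq_zero
        intro j hj
        simp only [Finset.mem_filter, Finset.mem_univ, true_and] at hj
        have : H j (p i) = 0 := hzero j (p i) (by exact_mod_cast hmono hj)
        simp [this]
      simp [hwdef, this]
    have hgne : g ≠ 0 := by
      intro h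
      have := hgdvd (p i)
      rw [h] at this
      have : w (p i) = 0 := zero_dvd_iff.mp this
      rw [hwpi] at this
      have := hpos i
      omega
    have hgnonneg : 0 ≤ g := by
      have h1 : |g| = g := by
        rw [Int.abs_eq_normalize, hgdef, Finset.normalize_gcd]
      rw [← h1]; exact abs_nonneg g
    set v : Fin k → ℤ := fun c => w c / g with hvdef
    have hgv : ∀ c, w c = g * v c := fun c => (Int.mul_ediv_cancel' (hgdvd c)).symm
    have hgR : (g : ℝ) ≠ 0 := Int.cast_ne_zero.mpr hgne
    have hvmem : (fun j => (v j : ℝ)) ∈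
        Submodule.span ℝ (Set.range fun i j => ((H i j : ℤ) : ℝ)) := by
      rw [Submodule.mem_span_range_iff_exists_fun ℝ]
      refine ⟨fun j => (e j : ℝ) / g, ?_⟩
      funext c
      simp only [Finset.sum_apply, Pi.smul_apply, smul_eq_mul]
      have h1 : ∑ j, (e j : ℝ) / (g:ℝ) * (H j c : ℝ)
          = (∑ j, (e j : ℝ) * (H j c : ℝ)) / g := by
        rw [Finset.sum_div]
        apply Finset.sum_congr rfl
        intro j _
        ring
      have h2 : ∑ j, (e j : ℝ) * (H j c : ℝ) = ((w c : ℤ) : ℝ) := by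
        rw [hw c]; push_cast; ring
      rw [h1, h2, hgv c]
      push_cast
      field_simp
    obtain ⟨d, hd⟩ := (Submodule.mem_span_range_iff_exists_fun _).mp (hsat v hvmem)
    have hdc : ∀ c, ∑ j, d j * H j c = v c := by
      intro c
      have := congrFun hd c
      simpa [Finset.sum_apply, Pi.smul_apply, smul_eq_mul] using this
    have hb : ∀ c, ∑ j, (g * d j - e j) * H j c = 0 := by
      intro c
      have h1 : ∑ j, (g * d j - e j) * H j c
          = g * (∑ j, d j * H j c) - ∑ j, e j * H j c := by
        rw [Finset.mul_sum, ← Finset.sum_sub_distrib]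
        apply Finset.sum_congr rfl
        intro j _
        ring
      rw [h1, hdc c, ← hw c, hgv c]
      ring
    have := rows_indep_aux hmono hpos hzero _ hb i
    have hei : e i = 1 := by simp [hedef]
    have : g * d i = 1 := by omega
    have hgd : g ∣ 1 := ⟨d i, this.symm⟩
    rcases Int.isUnit_iff.mp (isUnit_of_dvd_one hgd) with h | h
    · exact h
    · omega
  · -- gcd condition → saturated
    intro hgcd v hv
    obtain ⟨c, hc⟩ := (Submodule.mem_span_range_iff_exists_fun _).mp hv
    have hcc : ∀ col, ∑ j, c j * (H j col : ℝ) = (v col : ℝ) := by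
      intro col
      have := congrFun hc col
      simpa [Finset.sum_apply, Pi.smul_apply, smul_eq_mul] using this
    -- Cramer: det A • c = adjugate A *ᵥ (v ∘ p), an integer vector
    set A : Matrix (Fin l) (Fin l) ℤ := Matrix.of (fun i j => H j (p i)) with hAdef
    have hAtri : A.BlockTriangular OrderDual.toDual := by
      intro i j hij
      have hij' : i < j := hij
      exact hzero j (p i) (by exact_mod_cast hmono hij')
    have hdet : A.det = ∏ i, H i (p i) := by
      rw [Matrix.det_of_lowerTriangular A hAtri]
      rfl
    have hdetpos : 0 < A.det := by
      rw [hdet]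
      exact Finset.prod_pos (fun i _ => hpos i)
    set z : Fin l → ℤ := A.adjugate *ᵥ (fun i => v (p i)) with hzdef
    have key : ∀ j, (A.det : ℝ) * c j = (z j : ℝ) := by
      set f : ℤ →+* ℝ := Int.castRingHom ℝ with hfdef
      set Aℝ : Matrix (Fin l) (Fin l) ℝ := f.mapMatrix A with hARdef
      have hAc : Aℝ *ᵥ c = fun i => (v (p i) : ℝ) := by
        funext i
        simp only [hARdef, Matrix.mulVec, dotProduct, RingHom.mapMatrix_apply,
          Matrix.map_apply, hAdef, Matrix.of_apply, hfdef, Int.coe_castRingHom]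
        rw [← hcc (p i)]
        apply Finset.sum_congr rfl
        intro j _
        ring
      have h1 : Aℝ.adjugate *ᵥ (Aℝ *ᵥ c) = Aℝ.det • c := by
        rw [Matrix.mulVec_mulVec, Matrix.adjugate_mul, Matrix.smul_mulVec,
          Matrix.one_mulVec]
      rw [hAc] at h1
      have h3 : Aℝ.det = (A.det : ℝ) := by
        rw [hARdef, ← RingHom.map_det]
        rfl
      have h4 : Aℝ.adjugate = f.mapMatrix A.adjugate := by
        rw [hARdef, RingHom.map_adjugate]
      rw [h3, h4] at h1
      intro j
      have h2 := congrFun h1 j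
      have h7 : ((A.det : ℝ) • c) j = (A.det : ℝ) * c j := rfl
      rw [h7] at h2
      have h6 : (f.mapMatrix A.adjugate *ᵥ fun i => ((v (p i) : ℤ) : ℝ)) j
          = ((z j : ℤ) : ℝ) := by
        simp only [hzdef, Matrix.mulVec, dotProduct, RingHom.mapMatrix_apply,
          Matrix.map_apply, hfdef, Int.coe_castRingHom]
        push_cast
        ring
      rw [← h2, h6]
    -- minimal positive denominator
    set Sset : ℕ → Prop := fun n => 0 < n ∧ ∀ j, ∃ zz : ℤ, ((n : ℕ) : ℝ) * c j = zz
      with hSdef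
    have hSex : ∃ n, Sset n := by
      refine ⟨A.det.toNat, ?_, fun j => ⟨z j, ?_⟩⟩
      · omega
      · have : ((A.det.toNat : ℕ) : ℝ) = (A.det : ℝ) := by
          rw [← Int.cast_natCast]
          congr 1
          omega
        rw [this, key j]
    set m : ℕ := Nat.find hSex with hmdef
    obtain ⟨hm1, hm2⟩ : Sset m := Nat.find_spec hSex
    choose n hn using hm2
    have hmin : ∀ n' : ℕ, n' < m → ¬ Sset n' := fun n' h => Nat.find_min hSex h
    -- gcd of m with all the n j is 1
    have hdd : Nat.gcd m (Finset.univ.gcd (fun j => (n j).natAbs)) = 1 := by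
      set dd := Nat.gcd m (Finset.univ.gcd (fun j => (n j).natAbs)) with hdddef
      have hddm : dd ∣ m := Nat.gcd_dvd_left _ _
      have hddpos : 0 < dd := Nat.gcd_pos_of_pos_left _ hm1
      by_contra hne1
      have hdd2 : 2 ≤ dd := by omega
      have hltm : m / dd < m := Nat.div_lt_self hm1 hdd2
      apply hmin _ hltm
      constructor
      · exact Nat.div_pos (Nat.le_of_dvd hm1 hddm) hddpos
      · intro j
        have hddnj : (dd : ℤ) ∣ n j := by
          have h1 : dd ∣ (n j).natAbs :=
            dvd_trans (Nat.gcd_dvd_right _ _) (Finset.gcd_dvd (Finset.mem_univ j))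
          exact Int.dvd_natAbs.mp (Int.natCast_dvd_natCast.mpr h1)
        refine ⟨n j / dd, ?_⟩
        have hddR : (dd : ℝ) ≠ 0 := by positivity
        apply mul_right_cancel₀ hddR
        have h2 : ((m / dd : ℕ) : ℝ) * (dd : ℝ) = (m : ℝ) := by
          rw [← Nat.cast_mul, Nat.div_mul_cancel hddm]
        calc ((m / dd : ℕ) : ℝ) * c j * (dd : ℝ)
            = ((m / dd : ℕ) : ℝ) * (dd : ℝ) * c j := by ring
          _ = (m : ℝ) * c j := by rw [h2]
          _ = ((n j : ℤ) : ℝ) := hn j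
          _ = ((n j / dd : ℤ) : ℝ) * (dd : ℝ) := by
              have h9 : ((n j / (dd:ℤ) * (dd:ℤ) : ℤ) : ℝ)
                  = ((n j / (dd:ℤ) : ℤ) : ℝ) * (dd:ℝ) := by push_cast; ring
              rw [← h9, Int.ediv_mul_cancel hddnj]
    rcases eq_or_ne m 1 with hm1' | hm1'
    · -- all coefficients are integers
      rw [Submodule.mem_span_range_iff_exists_fun ℤ]
      refine ⟨n, ?_⟩
      have hcn : ∀ j, c j = (n j : ℝ) := by
        intro j
        have := hn j
        rw [hm1'] at this
        simpa using this
      funext col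
      have h1 : ((v col : ℤ) : ℝ) = ((∑ j, n j * H j col : ℤ) : ℝ) := by
        rw [← hcc col]
        push_cast
        apply Finset.sum_congr rfl
        intro j _
        rw [hcn j]
      have h2 : v col = ∑ j, n j * H j col := by exact_mod_cast h1
      simp only [Finset.sum_apply, Pi.smul_apply, smul_eq_mul]
      omega
    · -- contradiction via a prime dividing m
      exfalso
      obtain ⟨q, hq, hqm⟩ := Nat.exists_prime_and_dvd hm1'
      haveI : Fact q.Prime := ⟨hq⟩
      -- integer master equation
      have hInt : ∀ col, (m : ℤ) * v col = ∑ j, n j * H j col := by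
        intro col
        have h1 : (((m : ℤ) * v col : ℤ) : ℝ) = ((∑ j, n j * H j col : ℤ) : ℝ) := by
          push_cast
          rw [← hcc col, Finset.mul_sum]
          apply Finset.sum_congr rfl
          intro j _
          rw [← mul_assoc, hn j]
        exact_mod_cast h1
      -- some n j is not divisible by q
      have hex : ∃ j, ¬ (q : ℤ) ∣ n j := by
        by_contra hcon
        push_neg at hcon
        have h1 : q ∣ Finset.univ.gcd (fun j => (n j).natAbs) := by
          apply Finset.dvd_gcd
          intro j _
          have := Int.natAbs_dvd_natAbs.mpr (hcon j)
          simpa using this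
        have h2 : q ∣ Nat.gcd m (Finset.univ.gcd (fun j => (n j).natAbs)) :=
          Nat.dvd_gcd hqm h1
        rw [hdd] at h2
        exact Nat.Prime.one_lt hq |>.ne' (Nat.dvd_one.mp h2)
      have hne : (Finset.univ.filter (fun j => ¬ (q : ℤ) ∣ n j)).Nonempty := by
        obtain ⟨j, hj⟩ := hex
        exact ⟨j, by simp [hj]⟩
      set j0 := (Finset.univ.filter (fun j => ¬ (q : ℤ) ∣ n j)).min' hne with hj0def
      have hj0 : ¬ (q : ℤ) ∣ n j0 := by
        have := (Finset.univ.filter (fun j => ¬ (q : ℤ) ∣ n j)).min'_mem hne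
        simpa using this
      have hlt : ∀ j, j < j0 → (q : ℤ) ∣ n j := by
        intro j hj
        by_contra hjd
        exact absurd (Finset.min'_le _ j (by simp [hjd])) (not_le.mpr hj)
      -- work in ZMod q
      have hmod : ∀ col, ∑ j, ((n j : ℤ) : ZMod q) * ((H j col : ℤ) : ZMod q) = 0 := by
        intro col
        have h1 : (((m : ℤ) * v col : ℤ) : ZMod q) = ((∑ j, n j * H j col : ℤ) : ZMod q) := by
          rw [hInt col]
        have h2 : ((m : ℕ) : ZMod q) = 0 := by
          rw [ZMod.natCast_eq_zero_iff]
          exact hqm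
        push_cast at h1
        rw [h2, zero_mul] at h1
        rw [← h1]
      have hnj0 : ((n j0 : ℤ) : ZMod q) ≠ 0 := by
        rw [Ne, ZMod.intCast_zmod_eq_zero_iff_dvd]
        exact hj0
      set t : ZMod q := ((n j0 : ℤ) : ZMod q)⁻¹ with htdef
      set t' : ℤ := (t.val : ℤ) with ht'def
      have ht'cast : ((t' : ℤ) : ZMod q) = t := by
        rw [ht'def]
        push_cast
        exact ZMod.natCast_zmod_val t
      have ht'inv : ((t' * n j0 : ℤ) : ZMod q) = 1 := by
        push_cast
        rw [ht'cast]
        exact inv_mul_cancel₀ hnj0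
      set u : Fin l → ℤ := fun j => if j0 < j then t' * n j else 0 with hudef
      have hkey := hgcd j0 u
      have hqdvd : (q : ℤ) ∣ Finset.univ.gcd
          (fun col => H j0 col + ∑ j ∈ Finset.univ.filter (fun j => j0 < j), u j * H j col) := by
        apply Finset.dvd_gcd
        intro col _
        rw [← ZMod.intCast_zmod_eq_zero_iff_dvd]
        have hsp := sum_split_aux j0 (fun j => ((n j : ℤ) : ZMod q) * ((H j col : ℤ) : ZMod q))
        rw [hmod col] at hsp
        have hlt0 : ∑ j ∈ Finset.univ.filter (fun j => j < j0),
            ((n j : ℤ) : ZMod q) * ((H j col : ℤ) : ZMod q) = 0 := by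
          apply Finset.sum_eq_zero
          intro j hj
          simp only [Finset.mem_filter, Finset.mem_univ, true_and] at hj
          have : ((n j : ℤ) : ZMod q) = 0 := by
            rw [ZMod.intCast_zmod_eq_zero_iff_dvd]
            exact hlt j hj
          rw [this, zero_mul]
        rw [hlt0, zero_add] at hsp
        -- hsp : 0 = n j0 * H j0 col + ∑_{j>j0} n j * H j col  in ZMod q
        have hsum : ((n j0 : ℤ) : ZMod q) * ((H j0 col : ℤ) : ZMod q)
            + ∑ j ∈ Finset.univ.filter (fun j => j0 < j),
                ((n j : ℤ) : ZMod q) * ((H j col : ℤ) : ZMod q) = 0 := hsp.symm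
        have hgoal : ((H j0 col + ∑ j ∈ Finset.univ.filter (fun j => j0 < j),
            u j * H j col : ℤ) : ZMod q)
            = ((t' : ℤ) : ZMod q) * (((n j0 : ℤ) : ZMod q) * ((H j0 col : ℤ) : ZMod q)
              + ∑ j ∈ Finset.univ.filter (fun j => j0 < j),
                  ((n j : ℤ) : ZMod q) * ((H j col : ℤ) : ZMod q)) := by
          have h5 : ((t' : ℤ) : ZMod q) * ((n j0 : ℤ) : ZMod q) = 1 := by
            have h5a := ht'inv
            push_cast at h5a ⊢
            exact h5a
          push_cast
          rw [mul_add, ← mul_assoc, h5, one_mul, Finset.mul_sum]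
          congr 1
          apply Finset.sum_congr rfl
          intro j hj
          simp only [Finset.mem_filter, Finset.mem_univ, true_and] at hj
          simp only [hudef, if_pos hj]
          push_cast
          ring
        rw [hgoal, hsum, mul_zero]
      rw [hkey] at hqdvd
      have : (q : ℤ) ≤ 1 := Int.le_of_dvd one_pos hqdvd
      have := hq.two_le
      omega
end
end

section
/- Let F be a nonzero Laurent polynomial in k variables, and let A ∈ ℤ^{ℓ'×k} have rank ℓ. Suppose H ∈ ℤ^{ℓ×k} is such that A = V H' where H' consists of H on top of (ℓ'−ℓ) zero rows and V ∈ ℤ^{ℓ'×ℓ'} is nonsingular. Then m(F_A) = m(F_H). -/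
open MeasureTheory

noncomputable section

/-! On the torus `(ℝ/ℤ)^ℓ`, the substitution `F ↦ F_M` becomes precomposition with the
continuous group homomorphism `x ↦ Mᵀx : (ℝ/ℤ)^ℓ → (ℝ/ℤ)^k`. When this homomorphism is
surjective it pushes Haar measure to Haar measure, so `m(F_M) = m(F)`. Deleting the last
`ℓ' - ℓ` columns of `V` gives `V₀` with `A = V₀ H`, and `x ↦ V₀ᵀx` is `x ↦ Vᵀx`, which is
surjective because `ℝ/ℤ` is divisible and `V adj(V) = det(V) · 1`, followed by a coordinate
projection. -/

open Finset AddCircle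
open scoped Matrix

lemma substM_mul {m l k : ℕ} (V : Matrix (Fin m) (Fin l) ℤ) (M : Matrix (Fin l) (Fin k) ℤ)
    (F : LPoly k) : substM (V * M) F = substM V (substM M F) := by
  rw [substM, substM, substM, ← Finsupp.mapDomain_comp]
  congr 1
  funext e
  exact (Matrix.mulVec_mulVec e V M).symm

lemma evalT_substM {l k : ℕ} (M : Matrix (Fin l) (Fin k) ℤ) (F : LPoly k) (z : Fin l → ℂ) :
    evalT (substM M F) z = ∑ e ∈ F.support, F e * ∏ i, z i ^ (M *ᵥ e) i := by
  change (Finsupp.mapDomain (substExp M) F).sum (fun e c => c * ∏ i, z i ^ e i) = _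
  rw [Finsupp.sum_mapDomain_index (fun _ => zero_mul _) (fun _ _ _ => add_mul _ _ _)]
  rfl

lemma mul_eq_submatrix_castLE_mul {m l l' k : ℕ} (hll : l ≤ l')
    (V : Matrix (Fin m) (Fin l') ℤ) (H : Matrix (Fin l) (Fin k) ℤ)
    (H' : Matrix (Fin l') (Fin k) ℤ)
    (hH' : ∀ i : Fin l', H' i = if h : (i : ℕ) < l then H ⟨i, h⟩ else 0) :
    V * H' = V.submatrix id (Fin.castLE hll) * H := by
  ext i j
  refine (Fintype.sum_of_injective _ (Fin.castLE_injective hll) _ _ (fun r hr => ?_)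
    (fun r => ?_)).symm
  · have hrl : ¬ (r : ℕ) < l := fun h => hr ⟨⟨r, h⟩, rfl⟩
    simp [hH', hrl]
  · simp only [hH', Fin.val_castLE, Fin.is_lt, dite_true, Matrix.submatrix_apply, id]

namespace Matrix

variable {ι κ : Type*} [Fintype ι]

def torusHom (M : Matrix κ ι ℤ) : UnitAddTorus ι →+ UnitAddTorus κ where
  toFun x i := ∑ j, M i j • x j
  map_zero' := by ext; simp
  map_add' x y := by ext i; simp [smul_add, sum_add_distrib]

lemma torusHom_apply (M : Matrix κ ι ℤ) (x : UnitAddTorus ι) (i : κ) :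
    M.torusHom x i = ∑ j, M i j • x j := rfl

lemma continuous_torusHom (M : Matrix κ ι ℤ) : Continuous M.torusHom :=
  continuous_pi fun i => continuous_finsetSum _ fun j _ =>
    (continuous_zsmul (M i j)).comp (continuous_apply j)

lemma torusHom_mul {μ : Type*} [Fintype κ] (M : Matrix μ κ ℤ) (N : Matrix κ ι ℤ)
    (x : UnitAddTorus ι) : (M * N).torusHom x = M.torusHom (N.torusHom x) := by
  ext i
  simp only [torusHom_apply, mul_apply, smul_sum, sum_smul, mul_smul]
  exact sum_comm

variable [DecidableEq ι]

lemma torusHom_smul_one (c : ℤ) (x : UnitAddTorus ι) :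
    (c • (1 : Matrix ι ι ℤ)).torusHom x = c • x := by
  ext i
  simp only [torusHom_apply, smul_apply, one_apply, smul_eq_mul, mul_ite, mul_one, mul_zero,
    ite_smul, zero_smul, sum_ite_eq, mem_univ, if_true, Pi.smul_apply]

lemma torusHom_surjective_of_det_ne_zero {V : Matrix ι ι ℤ} (hV : V.det ≠ 0) :
    Function.Surjective V.torusHom := by
  intro y
  refine ⟨V.adjugate.torusHom fun i => DivisibleBy.div (y i) V.det, ?_⟩
  rw [← torusHom_mul, mul_adjugate, torusHom_smul_one]
  ext i
  exact DivisibleBy.div_cancel (y i) hV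

end Matrix

lemma coe_toCircle_sum_zsmul {T : ℝ} {ι : Type*} (s : Finset ι) (n : ι → ℤ)
    (x : ι → AddCircle T) :
    ((toCircle (∑ i ∈ s, n i • x i) : Circle) : ℂ) = ∏ i ∈ s, (toCircle (x i) : ℂ) ^ n i := by
  classical
  induction s using Finset.induction_on with
  | empty => simp
  | insert j s hj ih => simp [sum_insert hj, prod_insert hj, toCircle_add, toCircle_zsmul, ih]

def evalTorus {n : ℕ} (F : LPoly n) (x : UnitAddTorus (Fin n)) : ℂ :=
  evalT F fun i => toCircle (x i)

lemma evalTorus_substM {l k : ℕ} (M : Matrix (Fin l) (Fin k) ℤ) (F : LPoly k)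
    (x : UnitAddTorus (Fin l)) : evalTorus (substM M F) x = evalTorus F (Mᵀ.torusHom x) := by
  rw [evalTorus, evalT_substM]
  refine sum_congr rfl fun e _ => congrArg (F e * ·) ?_
  have hexp : ∑ i, (M *ᵥ e) i • x i = ∑ j, e j • Mᵀ.torusHom x j := by
    simp only [Matrix.torusHom_apply, Matrix.transpose_apply, Matrix.mulVec, dotProduct,
      sum_smul, smul_sum, ← mul_smul, mul_comm]
    exact sum_comm
  rw [← coe_toCircle_sum_zsmul, hexp, coe_toCircle_sum_zsmul]

lemma continuous_evalTorus {n : ℕ} (F : LPoly n) : Continuous (evalTorus F) := by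
  refine continuous_finsetSum _ fun e _ => continuous_const.mul ?_
  refine continuous_finsetProd _ fun i _ => ?_
  refine Continuous.zpow₀ ?_ _ fun x => Or.inl (Circle.coe_ne_zero _)
  exact continuous_subtype_val.comp (continuous_toCircle.comp (continuous_apply i))

lemma measurable_log_norm_evalTorus {n : ℕ} (F : LPoly n) :
    Measurable fun x => Real.log ‖evalTorus F x‖ :=
  Real.measurable_log.comp (continuous_evalTorus F).norm.measurable

lemma MeasureTheory.MeasurePreserving.integral_comp_of_aestronglyMeasurable {α β E : Type*}
    [MeasurableSpace α] [MeasurableSpace β] [NormedAddCommGroup E] [NormedSpace ℝ E]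
    {μ : Measure α} {ν : Measure β} {f : α → β} (hf : MeasurePreserving f μ ν)
    {g : β → E} (hg : AEStronglyMeasurable g ν) :
    ∫ x, g (f x) ∂μ = ∫ y, g y ∂ν := by
  rw [← hf.map_eq, integral_map hf.aemeasurable (hf.map_eq ▸ hg)]

lemma measurePreserving_coe_Icc (ι : Type*) [Fintype ι] :
    MeasurePreserving (fun (t : ι → ℝ) i => (t i : UnitAddCircle))
      (volume.restrict (Set.Icc 0 1)) volume := by
  rw [volume_pi, volume_pi, ← Measure.restrict_congr_set Measure.univ_pi_Ioc_ae_eq_Icc,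
    Measure.restrict_pi_pi]
  exact measurePreserving_pi _ _ fun _ => by simpa using AddCircle.measurePreserving_mk 1 0

lemma torusPt_eq {n : ℕ} (t : Fin n → ℝ) :
    torusPt t = fun i => (toCircle (t i : UnitAddCircle) : ℂ) := by
  ext i
  rw [torusPt, toCircle_apply_mk, Circle.coe_exp]
  push_cast
  ring_nf

lemma mm_eq_integral_evalTorus {n : ℕ} (F : LPoly n) :
    mm F = ∫ x, Real.log ‖evalTorus F x‖ := by
  rw [← (measurePreserving_coe_Icc (Fin n)).integral_comp_of_aestronglyMeasurable
    (measurable_log_norm_evalTorus F).aestronglyMeasurable, mm]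
  simp only [evalTorus, torusPt_eq]

lemma mm_substM_of_surjective {l k : ℕ} (M : Matrix (Fin l) (Fin k) ℤ) (F : LPoly k)
    (hM : Function.Surjective Mᵀ.torusHom) : mm (substM M F) = mm F := by
  have hmp : MeasurePreserving Mᵀ.torusHom :=
    AddMonoidHom.measurePreserving (Matrix.continuous_torusHom _) hM
      (by simp [volume_pi, Measure.pi_univ, AddCircle.measure_univ])
  simp only [mm_eq_integral_evalTorus, evalTorus_substM]
  exact hmp.integral_comp_of_aestronglyMeasurable
    (measurable_log_norm_evalTorus F).aestronglyMeasurable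

theorem mm_substM_eq_of_SHNF_factorization_general {l l' k : ℕ} (hll : l ≤ l')
    (F : LPoly k)
    (A : Matrix (Fin l') (Fin k) ℤ) (H : Matrix (Fin l) (Fin k) ℤ)
    (H' : Matrix (Fin l') (Fin k) ℤ)
    (hH' : ∀ i : Fin l', H' i = if h : (i : ℕ) < l then H ⟨i, h⟩ else 0)
    (V : Matrix (Fin l') (Fin l') ℤ) (hV : V.det ≠ 0) (hA : A = V * H') :
    mm (substM A F) = mm (substM H F) := by
  have hVt : Function.Surjective Vᵀ.torusHom :=
    Matrix.torusHom_surjective_of_det_ne_zero (by rwa [Matrix.det_transpose])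
  rw [hA, mul_eq_submatrix_castLE_mul hll V H H' hH', substM_mul]
  exact mm_substM_of_surjective _ _ ((Fin.castLE_injective hll).surjective_comp_right.comp hVt)

/-- If `A = V H'` where `H'` is `H` stacked on top of zero rows and `V` is
nonsingular, then `m(F_A) = m(F_H)`. -/
theorem mm_substM_eq_of_SHNF_factorization {l l' k : ℕ} (hll : l ≤ l')
    (F : LPoly k) (hF : F ≠ 0)
    (A : Matrix (Fin l') (Fin k) ℤ) (H : Matrix (Fin l) (Fin k) ℤ)
    (H' : Matrix (Fin l') (Fin k) ℤ)
    (hH' : ∀ i : Fin l', H' i = if h : (i : ℕ) < l then H ⟨i, h⟩ else 0)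
    (V : Matrix (Fin l') (Fin l') ℤ) (hV : V.det ≠ 0) (hA : A = V * H') :
    mm (substM A F) = mm (substM H F) :=
  mm_substM_eq_of_SHNF_factorization_general hll F A H H' hH' V hV hA
end
end
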